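/- Let H₁ and H₂ be graphs of equal order n and μ: V(H₁) → V(H₂) a bijection. If pt((H₁,H₂,μ)) = 1 then H₁, H₂, and (H₁,H₂,μ) all have the same number of connected components. -/

import Mathlib

open SimpleGraph

variable {V : Type*}

/-- One simultaneous round of the color change rule: all currently forceable
vertices become black. -/
def forceStep (G : SimpleGraph V) (S : Set V) : Set V :=
  S ∪ {w | ∃ v ∈ S, G.Adj v w ∧ ∀ u, G.Adj v u → u ∉ S → u = w}

/-- The (cumulative) set of black vertices after `t` simultaneous rounds,
starting from `B`; so `B^{(t)} = propSet G B t \ propSet G B (t-1)`. -/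
def propSet (G : SimpleGraph V) (B : Set V) : ℕ → Set V
  | 0 => B
  | t + 1 => forceStep G (propSet G B t)

/-- `B` is a zero forcing set of `G`. -/
def IsZFSet (G : SimpleGraph V) (B : Set V) : Prop := ∃ t, propSet G B t = Set.univ

/-- The zero forcing number `Z(G)`. -/
noncomputable def zfNum (G : SimpleGraph V) : ℕ :=
  sInf {n | ∃ B : Set V, IsZFSet G B ∧ B.ncard = n}

/-- `B` is a minimum zero forcing set of `G`. -/
def IsMinZFSet (G : SimpleGraph V) (B : Set V) : Prop := IsZFSet G B ∧ B.ncard = zfNum G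

/-- The propagation time `pt(G,B)` of a zero forcing set `B`. -/
noncomputable def ptSet (G : SimpleGraph V) (B : Set V) : ℕ :=
  sInf {t | propSet G B t = Set.univ}

/-- The minimum propagation time `pt(G)`. -/
noncomputable def ptMin (G : SimpleGraph V) : ℕ :=
  sInf (ptSet G '' {B | IsMinZFSet G B})

/-- The maximum propagation time `PT(G)`. -/
noncomputable def ptMax (G : SimpleGraph V) : ℕ :=
  sSup (ptSet G '' {B | IsMinZFSet G B})

/-- `IsChronList G S L` : starting from black set `S`, the list `L` is a valid
chronological list of forces, performed one at a time, ending with all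
vertices black. -/
def IsChronList (G : SimpleGraph V) : Set V → List (V × V) → Prop
  | S, [] => S = Set.univ
  | S, (v, w) :: L =>
      v ∈ S ∧ w ∉ S ∧ G.Adj v w ∧ (∀ u, G.Adj v u → u ∉ S → u = w) ∧
        IsChronList G (insert w S) L

/-- `F` is a set of forces of `B`: the unordered set of forces of some
chronological list of forces of `B`. -/
def IsForceSet (G : SimpleGraph V) (B : Set V) (F : Set (V × V)) : Prop :=
  ∃ L : List (V × V), IsChronList G B L ∧ {p | p ∈ L} = F

/-- The terminus of a set of forces: the vertices performing no force. -/
def termSet (F : Set (V × V)) : Set V := {v | ∀ w, (v, w) ∉ F}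

/-- The reverse set of forces. -/
def revSet (F : Set (V × V)) : Set (V × V) := (fun p : V × V => (p.2, p.1)) '' F

/-- The (cumulative) set of black vertices after `t` rounds when propagating
using only the forces in `F`, starting from `B`;
so `F^{(t)} = fpropSet G B F t \ fpropSet G B F (t-1)`. -/
def fpropSet (G : SimpleGraph V) (B : Set V) (F : Set (V × V)) : ℕ → Set V
  | 0 => B
  | t + 1 => fpropSet G B F t ∪
      {w | ∃ v, (v, w) ∈ F ∧ v ∈ fpropSet G B F t ∧ w ∉ fpropSet G B F t ∧
        ∀ u, G.Adj v u → u ∉ fpropSet G B F t → u = w}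

/-- The propagation time `pt(G,F)` of a set of forces `F` of `B`. -/
noncomputable def ptForces (G : SimpleGraph V) (B : Set V) (F : Set (V × V)) : ℕ :=
  sInf {t | fpropSet G B F t = Set.univ}

/-- `B` is an efficient zero forcing set of `G`. -/
def IsEffZFSet (G : SimpleGraph V) (B : Set V) : Prop :=
  IsMinZFSet G B ∧ ptSet G B = ptMin G

/-- `F` is an efficient set of forces of the minimum zero forcing set `B`. -/
def IsEffForces (G : SimpleGraph V) (B : Set V) (F : Set (V × V)) : Prop :=
  IsMinZFSet G B ∧ IsForceSet G B F ∧ ptForces G B F = ptMin G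

/-- The matching graph `(H₁, H₂, μ)`: the disjoint union of `H₁` and `H₂`
together with the perfect matching edges `{a, μ a}`. -/
def matchGraph {α β : Type*} (H1 : SimpleGraph α) (H2 : SimpleGraph β) (μ : α ≃ β) :
    SimpleGraph (α ⊕ β) :=
  SimpleGraph.fromRel (fun x y => match x, y with
    | Sum.inl a, Sum.inl b => H1.Adj a b
    | Sum.inr a, Sum.inr b => H2.Adj a b
    | Sum.inl a, Sum.inr b => μ a = b
    | Sum.inr _, Sum.inl _ => False)

/-!
If `pt(G) = 1` for `G = (H₁,H₂,μ)` on `2n` vertices, then `Z(G) ≥ n`: in a single round each white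
vertex is forced by its own black vertex, so a minimum zero forcing set is at least half of `V(G)`.
On the other hand, if an `H₂`-edge `{μ a₀, b₀}` leaves `μ(A)` for some `H₁`-closed set `A ∋ a₀`,
then `inl(Aᶜ) ∪ inr(μ(A \ {a₀}))` is a zero forcing set with only `n - 1` vertices: in three rounds
the matching edges out of `Aᶜ` blacken `inr(μ(Aᶜ))`, then `inr b₀` forces `inr (μ a₀)`, and then
every matching edge fires. Hence the endpoints of every `H₂`-edge are `H₁`-connected via `μ`, and
symmetrically, so `H₁ → G` and `H₂ → G` are bijective on connected components.
-/

section ZeroForcing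

variable {G : SimpleGraph V} {B : Set V}

lemma propSet_mono (G : SimpleGraph V) (B : Set V) : Monotone (propSet G B) :=
  monotone_nat_of_le_succ fun _ => Set.subset_union_left

lemma mem_propSet_succ_of_forces {t : ℕ} {v w : V} (hv : v ∈ propSet G B t) (hvw : G.Adj v w)
    (h : ∀ u, G.Adj v u → u ≠ w → u ∈ propSet G B t) : w ∈ propSet G B (t + 1) :=
  Or.inr ⟨v, hv, hvw, fun u hu hu' => by_contra fun hne => hu' (h u hu hne)⟩

lemma zfNum_le_ncard (hB : IsZFSet G B) : zfNum G ≤ B.ncard :=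
  Nat.sInf_le ⟨B, hB, rfl⟩

lemma exists_isZFSet_ncard_eq_zfNum (G : SimpleGraph V) :
    ∃ B, IsZFSet G B ∧ B.ncard = zfNum G :=
  Nat.sInf_mem (s := {n | ∃ B, IsZFSet G B ∧ B.ncard = n}) ⟨_, Set.univ, ⟨0, rfl⟩, rfl⟩

lemma exists_isMinZFSet_propSet_ptMin_eq_univ (h : 0 < ptMin G) :
    ∃ B, IsMinZFSet G B ∧ propSet G B (ptMin G) = Set.univ := by
  obtain ⟨B, hB, hpt⟩ := Nat.sInf_mem (Nat.nonempty_of_pos_sInf h)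
  refine ⟨B, hB, ?_⟩
  rw [ptMin, ← hpt]
  exact Nat.sInf_mem (Nat.nonempty_of_pos_sInf (hpt.trans_gt h))

lemma ncard_compl_le_ncard_of_propSet_one_eq_univ [Finite V] (h : propSet G B 1 = Set.univ) :
    Bᶜ.ncard ≤ B.ncard := by
  have hforced : ∀ w ∈ Bᶜ, ∃ v ∈ B, G.Adj v w ∧ ∀ u, G.Adj v u → u ∉ B → u = w :=
    fun w hw => Or.resolve_left (h.symm ▸ Set.mem_univ w : w ∈ propSet G B 1) hw
  choose! forcer hforcer_mem hforcer_adj hforcer_unique using hforced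
  refine Set.ncard_le_ncard_of_injOn forcer hforcer_mem (fun w hw w' hw' heq => ?_)
  exact (hforcer_unique w hw w' (heq ▸ hforcer_adj w' hw') hw').symm

end ZeroForcing

namespace SimpleGraph.Iso

variable {W : Type*} {G : SimpleGraph V} {G' : SimpleGraph W}

lemma preimage_forceStep (e : G ≃g G') (S : Set W) :
    e ⁻¹' forceStep G' S = forceStep G (e ⁻¹' S) := by
  ext x
  simp only [forceStep, Set.mem_preimage, Set.mem_union, Set.mem_ofPred_eq]
  refine or_congr Iff.rfl ?_
  rw [e.surjective.exists]
  refine exists_congr fun v => and_congr Iff.rfl (and_congr e.map_adj_iff ?_)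
  rw [e.surjective.forall]
  simp only [e.map_adj_iff, e.injective.eq_iff]

lemma preimage_propSet (e : G ≃g G') (B : Set W) (t : ℕ) :
    e ⁻¹' propSet G' B t = propSet G (e ⁻¹' B) t := by
  induction t with
  | zero => rfl
  | succ t ih => exact (e.preimage_forceStep _).trans (congrArg (forceStep G) ih)

lemma isZFSet_preimage (e : G ≃g G') {B : Set W} (h : IsZFSet G' B) : IsZFSet G (e ⁻¹' B) := by
  obtain ⟨t, ht⟩ := h
  exact ⟨t, by rw [← e.preimage_propSet, ht, Set.preimage_univ]⟩

lemma zfNum_le (e : G ≃g G') : zfNum G ≤ zfNum G' := by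
  obtain ⟨B, hB, hcard⟩ := exists_isZFSet_ncard_eq_zfNum G'
  calc zfNum G ≤ (e ⁻¹' B).ncard := zfNum_le_ncard (e.isZFSet_preimage hB)
    _ = zfNum G' := by
      rw [Set.ncard_preimage_of_injective_subset_range e.injective (by simp), hcard]

lemma zfNum_eq (e : G ≃g G') : zfNum G = zfNum G' :=
  e.zfNum_le.antisymm e.symm.zfNum_le

end SimpleGraph.Iso

namespace matchGraph

open Sum

variable {α β : Type*} {H1 : SimpleGraph α} {H2 : SimpleGraph β} {μ : α ≃ β}

@[simp]
lemma adj_inl_inl {a a' : α} : (matchGraph H1 H2 μ).Adj (inl a) (inl a') ↔ H1.Adj a a' := by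
  simp [matchGraph, H1.adj_comm a', and_iff_right_of_imp SimpleGraph.Adj.ne]

@[simp]
lemma adj_inr_inr {b b' : β} : (matchGraph H1 H2 μ).Adj (inr b) (inr b') ↔ H2.Adj b b' := by
  simp [matchGraph, H2.adj_comm b', and_iff_right_of_imp SimpleGraph.Adj.ne]

@[simp]
lemma adj_inl_inr {a : α} {b : β} : (matchGraph H1 H2 μ).Adj (inl a) (inr b) ↔ μ a = b := by
  simp [matchGraph]

@[simp]
lemma adj_inr_inl {a : α} {b : β} : (matchGraph H1 H2 μ).Adj (inr b) (inl a) ↔ μ a = b := by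
  simp [matchGraph]

variable (H1 H2 μ) in
def swapIso : matchGraph H1 H2 μ ≃g matchGraph H2 H1 μ.symm where
  toEquiv := Equiv.sumComm α β
  map_rel_iff' := by rintro (a | b) (a' | b') <;> simp [Equiv.eq_symm_apply, eq_comm]

lemma propSet_succ_eq_univ_of_inr_mem {B : Set (α ⊕ β)} {t : ℕ}
    (h : ∀ b, inr b ∈ propSet (matchGraph H1 H2 μ) B t) :
    propSet (matchGraph H1 H2 μ) B (t + 1) = Set.univ := by
  refine Set.eq_univ_of_forall ?_
  rintro (a | b)
  · refine mem_propSet_succ_of_forces (h (μ a)) (by simp) ?_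
    rintro (a' | b') hadj hne
    · exact absurd (congrArg inl (μ.injective (adj_inr_inl.1 hadj))) hne
    · exact h b'
  · exact propSet_mono _ _ t.le_succ (h b)

lemma isZFSet_inl_compl_union_inr_image_diff {A : Set α}
    (hA : ∀ ⦃c c'⦄, H1.Adj c c' → c ∈ A → c' ∈ A) {a₀ : α} {b₀ : β} (ha₀ : a₀ ∈ A)
    (hadj : H2.Adj (μ a₀) b₀) (hb₀ : μ.symm b₀ ∉ A) :
    IsZFSet (matchGraph H1 H2 μ) (inl '' Aᶜ ∪ inr '' (μ '' (A \ {a₀}))) := by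
  set G := matchGraph H1 H2 μ
  set S := inl '' Aᶜ ∪ inr '' (μ '' (A \ {a₀}))
  have hb₀ne : b₀ ≠ μ a₀ := by rintro rfl; simp [ha₀] at hb₀
  have round1 : ∀ b ≠ μ a₀, inr b ∈ propSet G S 1 := by
    intro b hb
    by_cases hbA : μ.symm b ∈ A
    · refine propSet_mono G S (Nat.zero_le 1) (Or.inr ⟨b, ⟨μ.symm b, ⟨hbA, ?_⟩, by simp⟩, rfl⟩)
      simpa [Equiv.symm_apply_eq] using hb
    · refine mem_propSet_succ_of_forces (v := inl (μ.symm b)) (Or.inl ⟨_, hbA, rfl⟩)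
        (adj_inl_inr.2 (by simp)) ?_
      rintro (c | b') hadj' hne
      · exact Or.inl ⟨c, fun hc => hbA (hA (adj_inl_inl.1 hadj').symm hc), rfl⟩
      · obtain rfl : b = b' := by simpa using adj_inl_inr.1 hadj'
        exact absurd rfl hne
  have round2 : ∀ b, inr b ∈ propSet G S 2 := by
    intro b
    by_cases hb : b = μ a₀
    · subst hb
      refine mem_propSet_succ_of_forces (round1 b₀ hb₀ne) (adj_inr_inr.2 hadj.symm) ?_
      rintro (c | b') hadj' hne
      · obtain rfl : μ c = b₀ := adj_inr_inl.1 hadj'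
        exact propSet_mono G S (Nat.zero_le 1) (Or.inl ⟨c, by simpa using hb₀, rfl⟩)
      · exact round1 b' fun h => hne (congrArg inr h)
    · exact propSet_mono G S one_le_two (round1 b hb)
  exact ⟨3, propSet_succ_eq_univ_of_inr_mem round2⟩

lemma zfNum_lt_card_of_adj_notMem [Finite α] {A : Set α}
    (hA : ∀ ⦃c c'⦄, H1.Adj c c' → c ∈ A → c' ∈ A) {a₀ : α} {b₀ : β} (ha₀ : a₀ ∈ A)
    (hadj : H2.Adj (μ a₀) b₀) (hb₀ : μ.symm b₀ ∉ A) :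
    zfNum (matchGraph H1 H2 μ) < Nat.card α := by
  have : Finite β := .of_equiv α μ
  calc zfNum (matchGraph H1 H2 μ) ≤ (inl '' Aᶜ ∪ inr '' (μ '' (A \ {a₀}))).ncard :=
        zfNum_le_ncard (isZFSet_inl_compl_union_inr_image_diff hA ha₀ hadj hb₀)
    _ = Aᶜ.ncard + (A.ncard - 1) := by
        rw [Set.ncard_union_eq Set.disjoint_image_inl_image_inr,
          Set.ncard_image_of_injective _ inl_injective,
          Set.ncard_image_of_injective _ inr_injective,
          Set.ncard_image_of_injective _ μ.injective, Set.ncard_sdiff_singleton_of_mem ha₀]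
    _ < Nat.card α := by
        have hA_pos : 0 < A.ncard := (Set.ncard_pos).2 ⟨a₀, ha₀⟩
        have := Set.ncard_add_ncard_compl A
        omega

lemma card_le_zfNum_of_ptMin_eq_one [Finite α] (h : ptMin (matchGraph H1 H2 μ) = 1) :
    Nat.card α ≤ zfNum (matchGraph H1 H2 μ) := by
  have : Finite β := .of_equiv α μ
  obtain ⟨B, ⟨-, hB_card⟩, hB⟩ := exists_isMinZFSet_propSet_ptMin_eq_univ (h ▸ Nat.one_pos)
  rw [h] at hB
  have hcompl := ncard_compl_le_ncard_of_propSet_one_eq_univ hB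
  have htotal := Set.ncard_add_ncard_compl B
  rw [Nat.card_sum, ← Nat.card_congr μ] at htotal
  omega

lemma reachable_symm_of_card_le_zfNum [Finite α]
    (hZ : Nat.card α ≤ zfNum (matchGraph H1 H2 μ)) {b b' : β} (hbb' : H2.Adj b b') :
    H1.Reachable (μ.symm b) (μ.symm b') := by
  by_contra hb'
  refine (zfNum_lt_card_of_adj_notMem (A := {c | H1.Reachable (μ.symm b) c})
    (fun c c' hcc' hc => hc.trans hcc'.reachable) (Reachable.refl _) ?_ hb').not_ge hZ
  simpa using hbb'

lemma reachable_of_reachable_inl_inl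
    (h : ∀ ⦃b b'⦄, H2.Adj b b' → H1.Reachable (μ.symm b) (μ.symm b')) {a a' : α}
    (haa' : (matchGraph H1 H2 μ).Reachable (inl a) (inl a')) : H1.Reachable a a' := by
  rw [reachable_iff_reflTransGen] at haa' ⊢
  refine haa'.lift' (Sum.elim id μ.symm) ?_
  rintro (c | b) (c' | b') hadj <;>
    simp only [adj_inl_inl, adj_inl_inr, adj_inr_inl, adj_inr_inr] at hadj
  · exact .single hadj
  · simp [Function.onFun, ← hadj, Relation.ReflTransGen.refl]
  · simp [Function.onFun, ← hadj, Relation.ReflTransGen.refl]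
  · exact (reachable_iff_reflTransGen _ _).1 (h hadj)

lemma card_connectedComponent_eq
    (h : ∀ ⦃b b'⦄, H2.Adj b b' → H1.Reachable (μ.symm b) (μ.symm b')) :
    Nat.card H1.ConnectedComponent = Nat.card (matchGraph H1 H2 μ).ConnectedComponent := by
  let φ : H1 →g matchGraph H1 H2 μ := ⟨inl, adj_inl_inl.2⟩
  refine Nat.card_eq_of_bijective (ConnectedComponent.map φ) ⟨?_, ?_⟩
  · refine ConnectedComponent.ind₂ fun a a' haa' => ?_
    exact ConnectedComponent.sound
      (reachable_of_reachable_inl_inl h (ConnectedComponent.exact haa'))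
  · refine ConnectedComponent.ind fun x => ?_
    rcases x with a | b
    · exact ⟨H1.connectedComponentMk a, rfl⟩
    · refine ⟨H1.connectedComponentMk (μ.symm b), ?_⟩
      exact ConnectedComponent.connectedComponentMk_eq_of_adj (adj_inl_inr.2 (by simp))

end matchGraph

theorem matchGraph_pt_one_components_general {α β : Type*} [Finite α]
    (H1 : SimpleGraph α) (H2 : SimpleGraph β) (μ : α ≃ β)
    (h : ptMin (matchGraph H1 H2 μ) = 1) :
    Nat.card H1.ConnectedComponent = Nat.card H2.ConnectedComponent ∧
      Nat.card H2.ConnectedComponent =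
        Nat.card (matchGraph H1 H2 μ).ConnectedComponent := by
  have : Finite β := .of_equiv α μ
  let swap := matchGraph.swapIso H1 H2 μ
  have hZ : Nat.card α ≤ zfNum (matchGraph H1 H2 μ) :=
    matchGraph.card_le_zfNum_of_ptMin_eq_one h
  have hZ_swap : Nat.card β ≤ zfNum (matchGraph H2 H1 μ.symm) := by
    rwa [← swap.zfNum_eq, ← Nat.card_congr μ]
  have hH1 : Nat.card H1.ConnectedComponent =
      Nat.card (matchGraph H1 H2 μ).ConnectedComponent :=
    matchGraph.card_connectedComponent_eq fun _ _ =>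
      matchGraph.reachable_symm_of_card_le_zfNum hZ
  have hH2 : Nat.card H2.ConnectedComponent =
      Nat.card (matchGraph H1 H2 μ).ConnectedComponent :=
    (matchGraph.card_connectedComponent_eq fun _ _ =>
      matchGraph.reachable_symm_of_card_le_zfNum hZ_swap).trans
        (Nat.card_congr swap.connectedComponentEquiv.symm)
  exact ⟨hH1.trans hH2.symm, hH2⟩

/-- If `pt((H₁,H₂,μ)) = 1`, then `H₁`, `H₂`, and `(H₁,H₂,μ)` all have the same
number of connected components. -/
theorem matchGraph_pt_one_components {α β : Type*} [Finite α] [Finite β]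
    (H1 : SimpleGraph α) (H2 : SimpleGraph β) (μ : α ≃ β)
    (h : ptMin (matchGraph H1 H2 μ) = 1) :
    Nat.card H1.ConnectedComponent = Nat.card H2.ConnectedComponent ∧
      Nat.card H2.ConnectedComponent =
        Nat.card (matchGraph H1 H2 μ).ConnectedComponent :=
  matchGraph_pt_one_components_general H1 H2 μ h
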